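/- arXiv:math/0612527 — 2 statements merged into one kernel-verified Lean document; each statement's English description precedes it below -/
import Mathlib

section
/- Let n and j be integers with 0 ≤ 2j ≤ n, let Y be a harmonic homogeneous polynomial of degree n−2j in d variables, let q be a real polynomial of one variable of degree j, and set β = n−2j+(d−2)/2 and R(x) = q(2‖x‖²−1)·Y(x). Then for all x ∈ ℝ^d, Δ[(1−‖x‖²)·R(x)] = 4·(𝒥_β q)(2‖x‖²−1)·Y(x), where (𝒥_β q)(s) := (1−s²)q''(s) + (β−1−(β+3)s)q'(s) − (β+1)q(s) and Δ is the Laplace operator on ℝ^d. -/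
open MvPolynomial

noncomputable section

/-- The Laplace operator `Δ = ∑ ∂²/∂x_i²` on polynomials in `d` variables. -/
def mvLaplacian {d : ℕ} (p : MvPolynomial (Fin d) ℝ) : MvPolynomial (Fin d) ℝ :=
  ∑ i : Fin d, pderiv i (pderiv i p)

/-- The polynomial `‖x‖² = x₁² + ⋯ + x_d²`. -/
def sumSq (d : ℕ) : MvPolynomial (Fin d) ℝ := ∑ i : Fin d, X i ^ 2

/-- The operator `𝒥_β q = (1-s²)q'' + (β-1-(β+3)s)q' - (β+1)q` on one-variable polynomials. -/
def Jop (β : ℝ) (q : Polynomial ℝ) : Polynomial ℝ :=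
  (1 - Polynomial.X ^ 2) * q.derivative.derivative +
    (Polynomial.C (β - 1) - Polynomial.C (β + 3) * Polynomial.X) * q.derivative -
    Polynomial.C (β + 1) * q

/-!
Write `t = ‖x‖²`. For a harmonic `Y`, homogeneous of degree `m`, the product rule and Euler's
identity `∑ xᵢ ∂ᵢY = m Y` give `Δ[g(t) Y] = 4 (t g''(t) + (m + d/2) g'(t)) Y` for every
one-variable polynomial `g`. Taking `g(t) = (1 - t) q(2t - 1)`, so that
`(1 - ‖x‖²) R = g(‖x‖²) Y`, and substituting `s = 2t - 1` turns `t g'' + (β + 1) g'` into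
`(𝒥_β q)(s)`.
-/

section Radial

variable {d : ℕ}

lemma pderiv_sumSq (i : Fin d) : pderiv i (sumSq d) = 2 * X i := by
  simp [sumSq, pderiv_X, Pi.single_apply, mul_comm]

lemma pderiv_aeval_sumSq (i : Fin d) (g : Polynomial ℝ) :
    pderiv i (Polynomial.aeval (sumSq d) g) =
      Polynomial.aeval (sumSq d) (Polynomial.derivative g) * (2 * X i) := by
  rw [Derivation.comp_aeval_eq, pderiv_sumSq, smul_eq_mul]

lemma eval_aeval_sumSq (x : Fin d → ℝ) (g : Polynomial ℝ) :
    eval x (Polynomial.aeval (sumSq d) g) = g.eval (∑ i, x i ^ 2) := by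
  change MvPolynomial.aeval x _ = _
  rw [← Polynomial.aeval_algHom_apply]
  simp [sumSq]

lemma mvLaplacian_aeval_sumSq_mul {m : ℕ} {Y : MvPolynomial (Fin d) ℝ}
    (hYhom : Y.IsHomogeneous m) (hYharm : mvLaplacian Y = 0) (g : Polynomial ℝ) :
    mvLaplacian (Polynomial.aeval (sumSq d) g * Y) =
      4 * Polynomial.aeval (sumSq d)
        (Polynomial.X * g.derivative.derivative +
          Polynomial.C ((m : ℝ) + d / 2) * g.derivative) * Y := by
  have hsecond (i : Fin d) :
      pderiv i (pderiv i (Polynomial.aeval (sumSq d) g * Y)) =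
        4 * Polynomial.aeval (sumSq d) g.derivative.derivative * X i ^ 2 * Y +
          2 * Polynomial.aeval (sumSq d) g.derivative * Y +
          4 * Polynomial.aeval (sumSq d) g.derivative * (X i * pderiv i Y) +
          Polynomial.aeval (sumSq d) g * pderiv i (pderiv i Y) := by
    have h2 : pderiv i (2 : MvPolynomial (Fin d) ℝ) = 0 := (pderiv i).map_natCast 2
    simp only [pderiv_mul, pderiv_aeval_sumSq, map_add, pderiv_X_self, h2]
    ring
  have hEuler : ∑ i, X i * pderiv i Y = (m : MvPolynomial (Fin d) ℝ) * Y := by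
    rw [hYhom.sum_X_mul_pderiv, nsmul_eq_mul]
  have hsumSq : ∑ i : Fin d, X i ^ 2 = sumSq d := rfl
  rw [mvLaplacian] at hYharm ⊢
  simp only [hsecond, Finset.sum_add_distrib, ← Finset.sum_mul, ← Finset.mul_sum, hEuler, hYharm,
    Finset.sum_const, Finset.card_univ, Fintype.card_fin, nsmul_eq_mul, hsumSq]
  simp only [map_add, map_mul, Polynomial.aeval_X, Polynomial.aeval_C, algebraMap_eq, map_natCast]
  have hhalf : (C ((d : ℝ) / 2) : MvPolynomial (Fin d) ℝ) * 2 = d := by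
    rw [← map_ofNat C 2, ← map_mul, div_mul_cancel₀ _ two_ne_zero, map_natCast]
  linear_combination (-2 * Polynomial.aeval (sumSq d) g.derivative * Y) * hhalf

end Radial

lemma X_mul_derivative_derivative_add_of_eq_comp (β : ℝ) (q g : Polynomial ℝ)
    (hg : g = (1 - Polynomial.X) * q.comp (2 * Polynomial.X - 1)) :
    Polynomial.X * g.derivative.derivative + Polynomial.C (β + 1) * g.derivative =
      (Jop β q).comp (2 * Polynomial.X - 1) := by
  subst hg
  refine Polynomial.funext fun t => ?_
  simp only [Jop, Polynomial.derivative_mul, Polynomial.derivative_comp,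
    Polynomial.derivative_sub, Polynomial.derivative_one, Polynomial.derivative_X,
    Polynomial.derivative_ofNat, Polynomial.derivative_zero, Polynomial.derivative_add,
    Polynomial.eval_add, Polynomial.eval_mul, Polynomial.eval_sub,
    Polynomial.eval_one, Polynomial.eval_X, Polynomial.eval_C, Polynomial.eval_comp,
    Polynomial.eval_ofNat, Polynomial.eval_pow, Polynomial.eval_zero]
  ring

theorem stmt0_general (d : ℕ) (n j : ℕ) (hjn : 2 * j ≤ n)
    (Y : MvPolynomial (Fin d) ℝ) (hYhom : Y.IsHomogeneous (n - 2 * j))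
    (hYharm : mvLaplacian Y = 0)
    (q : Polynomial ℝ)
    (β : ℝ) (hβ : β = (n : ℝ) - 2 * (j : ℝ) + ((d : ℝ) - 2) / 2)
    (R : MvPolynomial (Fin d) ℝ)
    (hR : R = Polynomial.aeval (2 * sumSq d - 1) q * Y) :
    ∀ x : Fin d → ℝ,
      eval x (mvLaplacian ((1 - sumSq d) * R)) =
        4 * Polynomial.eval (2 * ∑ i, x i ^ 2 - 1) (Jop β q) * eval x Y := by
  intro x
  set g := (1 - Polynomial.X) * q.comp (2 * Polynomial.X - 1) with hg
  have hRg : (1 - sumSq d) * R = Polynomial.aeval (sumSq d) g * Y := by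
    simp only [hR, g, map_mul, map_sub, map_one, Polynomial.aeval_X, Polynomial.aeval_comp,
      map_ofNat, mul_assoc]
  have hβm : ((n - 2 * j : ℕ) : ℝ) + d / 2 = β + 1 := by
    rw [hβ, Nat.cast_sub hjn]
    push_cast
    ring
  rw [hRg, mvLaplacian_aeval_sumSq_mul hYhom hYharm, hβm,
    X_mul_derivative_derivative_add_of_eq_comp β q g hg, map_mul, map_mul, eval_aeval_sumSq,
    Polynomial.eval_comp]
  simp

/-- Lemma 2.1: if `Y` is a harmonic polynomial, homogeneous of degree
`n - 2j`, `q` is a one-variable polynomial of degree `j`, `β = n - 2j + (d-2)/2` and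
`R(x) = q(2‖x‖²-1) Y(x)`, then `Δ[(1-‖x‖²) R(x)] = 4 (𝒥_β q)(2‖x‖²-1) Y(x)`. -/
theorem stmt0 (d : ℕ) (hd : 2 ≤ d) (n j : ℕ) (hjn : 2 * j ≤ n)
    (Y : MvPolynomial (Fin d) ℝ) (hYhom : Y.IsHomogeneous (n - 2 * j))
    (hYharm : mvLaplacian Y = 0)
    (q : Polynomial ℝ) (hq : q.natDegree = j)
    (β : ℝ) (hβ : β = (n : ℝ) - 2 * (j : ℝ) + ((d : ℝ) - 2) / 2)
    (R : MvPolynomial (Fin d) ℝ)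
    (hR : R = Polynomial.aeval (2 * sumSq d - 1) q * Y) :
    ∀ x : Fin d → ℝ,
      eval x (mvLaplacian ((1 - sumSq d) * R)) =
        4 * Polynomial.eval (2 * ∑ i, x i ^ 2 - 1) (Jop β q) * eval x Y :=
  stmt0_general d n j hjn Y hYhom hYharm q β hβ R hR
end
end

section
/- Let n ≥ 0 and 0 ≤ j ≤ n/2, 1 ≤ ν ≤ σ_{n−2j}, and let x' ∈ S^{d−1}. Then the radial derivative of U_{j,ν}^n at the boundary satisfies (d/dr) U_{0,ν}^n(r x')|_{r=1} = n·Y_ν^n(x'), and for j ≥ 1, (d/dr) U_{j,ν}^n(r x')|_{r=1} = −2j·Y_ν^{n−2j}(x'). Moreover U_{0,ν}^n(x') = Y_ν^n(x') and U_{j,ν}^n(x') = 0 for j ≥ 1 and x' ∈ S^{d−1}. -/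
open MeasureTheory Metric MvPolynomial RealInnerProductSpace

noncomputable section

/-- Generalized binomial coefficient `C(z, k)` for real `z`. -/
def genBinom (z : ℝ) (k : ℕ) : ℝ := (∏ i ∈ Finset.range k, (z - i)) / (Nat.factorial k)

/-- The Jacobi polynomial `P_n^{(a,b)}`, normalized so that `P_n^{(a,b)}(1) = C(n+a, n)`. -/
def jacobiPoly (n : ℕ) (a b : ℝ) : Polynomial ℝ :=
  ∑ s ∈ Finset.range (n + 1),
    Polynomial.C (genBinom ((n : ℝ) + a) (n - s) * genBinom ((n : ℝ) + b) s) *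
      (Polynomial.C (2⁻¹) * (Polynomial.X - 1)) ^ s *
      (Polynomial.C (2⁻¹) * (Polynomial.X + 1)) ^ (n - s)

/-- The Jacobi polynomial as a real function. -/
def jacobiR (n : ℕ) (a b x : ℝ) : ℝ := (jacobiPoly n a b).eval x

/-- `σ_m`, the dimension of the space of spherical harmonics of degree `m` in `d` variables. -/
def sigmaDim (d m : ℕ) : ℕ := (m + d - 1).choose (d - 1) - (m + d - 3).choose (d - 1)

/-- The surface area `ω_d = 2 π^{d/2} / Γ(d/2)` of the unit sphere `S^{d-1}`. -/
def omegaD (d : ℕ) : ℝ := 2 * Real.pi ^ ((d : ℝ) / 2) / Real.Gamma ((d : ℝ) / 2)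

/-- Euclidean space `ℝ^d`. -/
abbrev Edim (d : ℕ) := EuclideanSpace ℝ (Fin d)

/-- Evaluation of a polynomial in `d` variables at a point of `ℝ^d`. -/
def pEval {d : ℕ} (p : MvPolynomial (Fin d) ℝ) (x : Edim d) : ℝ := eval (fun i => x i) p

/-- The surface measure `dω` on the unit sphere `S^{d-1}`. -/
def sphMeasure (d : ℕ) : Measure (sphere (0 : Edim d) 1) :=
  (volume : Measure (Edim d)).toSphere

/-- The Sobolev inner product `⟨f,g⟩_I`. -/
def innerI (d : ℕ) (lam : ℝ) (f g : Edim d → ℝ) : ℝ :=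
  (lam / omegaD d) * ∫ x in closedBall (0 : Edim d) 1, ⟪gradient f x, gradient g x⟫ +
    (1 / omegaD d) * ∫ y : sphere (0 : Edim d) 1, f y * g y ∂(sphMeasure d)

/-- The Sobolev inner product `⟨f,g⟩_II`. -/
def innerII (d : ℕ) (lam : ℝ) (f g : Edim d → ℝ) : ℝ :=
  (lam / omegaD d) * ∫ x in closedBall (0 : Edim d) 1, ⟪gradient f x, gradient g x⟫ +
    f 0 * g 0

/-- The polynomials `U_{j,ν}^n`. -/
def Upoly (d : ℕ) (Y : (m : ℕ) → Fin (sigmaDim d m) → MvPolynomial (Fin d) ℝ)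
    (n j : ℕ) (ν : Fin (sigmaDim d (n - 2 * j))) : MvPolynomial (Fin d) ℝ :=
  if j = 0 then Y (n - 2 * j) ν
  else (1 - sumSq d) *
      Polynomial.aeval (2 * sumSq d - 1)
        (jacobiPoly (j - 1) 1 ((n : ℝ) - 2 * (j : ℝ) + ((d : ℝ) - 2) / 2)) *
      Y (n - 2 * j) ν

/-! On the ray `t ↦ t • x'` with `‖x'‖ = 1`, homogeneity gives `Y(t x') = t ^ m Y(x')` and
`‖t x'‖² = t²`, so `U_{j,ν}^n` restricts to `(1 - t²) P(2t² - 1) t^(n-2j) Y(x')`. The factor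
`1 - t²` vanishes at `t = 1`, hence the derivative there is `-2 P(1) Y(x')`, and
`P(1) = C(j, j - 1) = j` for `P = P_{j-1}^{(1, β)}`. -/

theorem MvPolynomial.IsHomogeneous.eval_smul {σ R : Type*} [CommSemiring R]
    {p : MvPolynomial σ R} {m : ℕ} (hp : p.IsHomogeneous m) (t : R) (x : σ → R) :
    eval (t • x) p = t ^ m * eval x p := by
  rw [eval_eq, eval_eq, Finset.mul_sum]
  refine Finset.sum_congr rfl fun e he => ?_
  have hdeg : ∑ i ∈ e.support, e i = m := by
    simpa [Finsupp.weight_apply, Finsupp.sum] using hp (mem_support_iff.mp he)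
  simp only [Pi.smul_apply, smul_eq_mul, mul_pow, Finset.prod_mul_distrib,
    Finset.prod_pow_eq_pow_sum, hdeg]
  ring

lemma pEval_smul_of_isHomogeneous {d m : ℕ} {p : MvPolynomial (Fin d) ℝ}
    (hp : p.IsHomogeneous m) (t : ℝ) (x : Edim d) :
    pEval p (t • x) = t ^ m * pEval p x :=
  hp.eval_smul t _

lemma pEval_sumSq {d : ℕ} (x : Edim d) : pEval (sumSq d) x = ‖x‖ ^ 2 := by
  simp [pEval, sumSq, EuclideanSpace.real_norm_sq_eq]

theorem MvPolynomial.eval_polynomial_aeval {σ R : Type*} [CommRing R] (y : σ → R)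
    (q : MvPolynomial σ R) (J : Polynomial R) :
    eval y (Polynomial.aeval q J) = J.eval (eval y q) := by
  simpa [coe_aeval_eq_eval, Polynomial.coe_aeval_eq_eval] using
    (Polynomial.aeval_algHom_apply (MvPolynomial.aeval y) q J).symm

lemma genBinom_natCast (a b : ℕ) : genBinom a b = a.choose b := by
  rw [genBinom, ← descPochhammer_eval_eq_prod_range, Nat.cast_choose_eq_descPochhammer_div]

lemma jacobiPoly_eval_one (n : ℕ) (a b : ℝ) :
    (jacobiPoly n a b).eval 1 = genBinom (n + a) n := by
  rw [jacobiPoly, Polynomial.eval_finsetSum, Finset.sum_eq_single 0]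
  · norm_num [genBinom]
  · intro s _ hs
    simp [zero_pow hs]
  · simp

lemma jacobiPoly_one_eval_one (n : ℕ) (b : ℝ) : (jacobiPoly n 1 b).eval 1 = n + 1 := by
  rw [jacobiPoly_eval_one, ← Nat.cast_succ, genBinom_natCast, Nat.choose_succ_self_right]

lemma hasDerivAt_one_sub_sq_mul {h : ℝ → ℝ} (hh : DifferentiableAt ℝ h 1) :
    HasDerivAt (fun t => (1 - t ^ 2) * h t) (-2 * h 1) 1 := by
  have hsq : HasDerivAt (fun t : ℝ => 1 - t ^ 2) (-2) 1 := by
    simpa using (hasDerivAt_pow 2 (1 : ℝ)).const_sub 1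
  simpa using hsq.fun_mul hh.hasDerivAt

section Upoly

variable {d : ℕ} (Y : (m : ℕ) → Fin (sigmaDim d m) → MvPolynomial (Fin d) ℝ) (n : ℕ)

lemma Upoly_zero (ν : Fin (sigmaDim d (n - 2 * 0))) : Upoly d Y n 0 ν = Y (n - 2 * 0) ν :=
  if_pos rfl

lemma pEval_Upoly_smul {j : ℕ} (hj : j ≠ 0) (ν : Fin (sigmaDim d (n - 2 * j)))
    (hY : (Y (n - 2 * j) ν).IsHomogeneous (n - 2 * j)) {x : Edim d} (hx : ‖x‖ = 1) (t : ℝ) :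
    pEval (Upoly d Y n j ν) (t • x) =
      (1 - t ^ 2) *
        ((jacobiPoly (j - 1) 1 ((n : ℝ) - 2 * (j : ℝ) + ((d : ℝ) - 2) / 2)).eval (2 * t ^ 2 - 1) *
          (t ^ (n - 2 * j) * pEval (Y (n - 2 * j) ν) x)) := by
  have hS : pEval (sumSq d) (t • x) = t ^ 2 := by
    rw [pEval_sumSq, norm_smul, hx, mul_one, Real.norm_eq_abs, sq_abs]
  have hYt := pEval_smul_of_isHomogeneous hY t x
  simp only [Upoly, if_neg hj, pEval, map_mul, map_sub, map_one, map_ofNat,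
    eval_polynomial_aeval] at hS hYt ⊢
  rw [hS, hYt]
  ring

end Upoly

theorem stmt6_general (d : ℕ)
    (Y : (m : ℕ) → Fin (sigmaDim d m) → MvPolynomial (Fin d) ℝ)
    (hYhom : ∀ m ν, (Y m ν).IsHomogeneous m)
    (n : ℕ) (x' : Edim d) (hx' : ‖x'‖ = 1) :
    (∀ ν : Fin (sigmaDim d (n - 2 * 0)),
      deriv (fun t : ℝ => pEval (Upoly d Y n 0 ν) (t • x')) 1 =
          (n : ℝ) * pEval (Y (n - 2 * 0) ν) x' ∧
        pEval (Upoly d Y n 0 ν) x' = pEval (Y (n - 2 * 0) ν) x') ∧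
    (∀ j : ℕ, 1 ≤ j → 2 * j ≤ n → ∀ ν : Fin (sigmaDim d (n - 2 * j)),
      deriv (fun t : ℝ => pEval (Upoly d Y n j ν) (t • x')) 1 =
          -2 * (j : ℝ) * pEval (Y (n - 2 * j) ν) x' ∧
        pEval (Upoly d Y n j ν) x' = 0) := by
  refine ⟨fun ν => ⟨?_, by rw [Upoly_zero]⟩, fun j hj _ ν => ?_⟩
  · simp [Upoly_zero, pEval_smul_of_isHomogeneous (hYhom _ _)]
  · have hrad := pEval_Upoly_smul Y n (by omega) ν (hYhom _ _) hx'
    refine ⟨?_, by simpa using hrad 1⟩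
    rw [funext hrad, (hasDerivAt_one_sub_sq_mul (by fun_prop)).deriv]
    norm_num [jacobiPoly_one_eval_one, Nat.cast_sub hj, mul_assoc]

/-- boundary values and radial derivatives of `U_{j,ν}^n` on the unit sphere:
`(d/dr)U_{0,ν}^n(rx')|_{r=1} = n Y_ν^n(x')`, `(d/dr)U_{j,ν}^n(rx')|_{r=1} = -2j Y_ν^{n-2j}(x')`
for `j ≥ 1`, `U_{0,ν}^n(x') = Y_ν^n(x')`, and `U_{j,ν}^n(x') = 0` for `j ≥ 1`. -/
theorem stmt6 (d : ℕ) (hd : 2 ≤ d)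
    (Y : (m : ℕ) → Fin (sigmaDim d m) → MvPolynomial (Fin d) ℝ)
    (hYhom : ∀ m ν, (Y m ν).IsHomogeneous m)
    (hYharm : ∀ m ν, mvLaplacian (Y m ν) = 0)
    (hYon : ∀ (m k : ℕ) (ν : Fin (sigmaDim d m)) (μ : Fin (sigmaDim d k)),
      (1 / omegaD d) * ∫ y : sphere (0 : Edim d) 1,
          pEval (Y m ν) y * pEval (Y k μ) y ∂(sphMeasure d) =
        if m = k ∧ (ν : ℕ) = (μ : ℕ) then 1 else 0)
    (n : ℕ) (x' : Edim d) (hx' : ‖x'‖ = 1) :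
    (∀ ν : Fin (sigmaDim d (n - 2 * 0)),
      deriv (fun t : ℝ => pEval (Upoly d Y n 0 ν) (t • x')) 1 =
          (n : ℝ) * pEval (Y (n - 2 * 0) ν) x' ∧
        pEval (Upoly d Y n 0 ν) x' = pEval (Y (n - 2 * 0) ν) x') ∧
    (∀ j : ℕ, 1 ≤ j → 2 * j ≤ n → ∀ ν : Fin (sigmaDim d (n - 2 * j)),
      deriv (fun t : ℝ => pEval (Upoly d Y n j ν) (t • x')) 1 =
          -2 * (j : ℝ) * pEval (Y (n - 2 * j) ν) x' ∧
        pEval (Upoly d Y n j ν) x' = 0) :=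
  stmt6_general d Y hYhom n x' hx'
end
end
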